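/- Let D be an integral domain with quotient field K and let S be a set of monic polynomials of degree n in D[X]. Then Int(M_n^S(D)) = Int(C_n^S(D)), where C_n^S(D) = {C_p : p ∈ S} is the set of companion matrices of the polynomials in S; that is, a polynomial f ∈ K[X] satisfies f(M) ∈ M_n(D) for every matrix M with characteristic polynomial in S if and only if f(C_p) ∈ M_n(D) for every p ∈ S. -/

import Mathlib

/-- The companion matrix of a monic polynomial `p` of degree `n`: ones on the subdiagonal
and `-p.coeff i` as the `i`-th entry of the last column. -/
def companionMatrix {D : Type*} [CommRing D] (n : ℕ) (p : Polynomial D) :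
    Matrix (Fin n) (Fin n) D :=
  Matrix.of fun i j =>
    if (j : ℕ) = n - 1 then -p.coeff i else if (i : ℕ) = (j : ℕ) + 1 then 1 else 0

/-!
Let `M` have characteristic polynomial `p ∈ S`. Since `p` is monic, `f = q p + r` in `K[X]` with
`deg r < n`, and by Cayley–Hamilton `f(M) = r(M)` and `f(C_p) = r(C_p)`. For `k < n` the power
`C_p ^ k` sends the first basis vector `e₀` to `e_k`, so the first column of `r(C_p)` is the
coefficient vector of `r`. Integrality of `f(C_p)` therefore forces `r ∈ D[X]`, whence
`f(M) = r(M)` is integral. Conversely, `C_p` itself has characteristic polynomial `p`.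
-/

open Polynomial

theorem Polynomial.IsMonicOfDegree.map {R S : Type*} [Semiring R] [Semiring S] [Nontrivial S]
    {p : R[X]} {n : ℕ} (hp : p.IsMonicOfDegree n) (φ : R →+* S) :
    (p.map φ).IsMonicOfDegree n :=
  ⟨(hp.monic.natDegree_map φ).trans hp.natDegree_eq, hp.monic.map φ⟩

theorem Matrix.aeval_map_map {R S ι : Type*} [CommRing R] [CommRing S] [Fintype ι]
    [DecidableEq ι] (φ : R →+* S) (M : Matrix ι ι R) (q : R[X]) :
    aeval (M.map φ) (q.map φ) = (aeval M q).map φ := by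
  refine (map_aeval_eq_aeval_map (T := S) (U := Matrix ι ι S) (ψ := φ.mapMatrix) ?_ q M).symm
  ext r i j
  simp [Matrix.algebraMap_eq_diagonal, Matrix.diagonal_apply, apply_ite φ]

section

variable {R : Type*} [CommRing R] {n : ℕ}

theorem companionMatrix_pow_apply_zero [NeZero n] (p : R[X]) {k : ℕ} (hk : k < n)
    (i : Fin n) : (companionMatrix n p ^ k) i 0 = if (i : ℕ) = k then 1 else 0 := by
  induction k generalizing i with
  | zero => simp only [pow_zero, Matrix.one_apply, Fin.ext_iff, Fin.val_zero]
  | succ k ih =>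
    have hkn : k ≠ n - 1 := by omega
    rw [pow_succ', Matrix.mul_apply, Finset.sum_eq_single ⟨k, by omega⟩]
    · rw [ih (by omega), if_pos rfl, mul_one]
      simp [companionMatrix, hkn]
    · intro j _ hj
      rw [ih (by omega), if_neg (fun h => hj (Fin.ext h)), mul_zero]
    · simp

theorem companionMatrix_pow_self_apply_zero [NeZero n] (p : R[X]) (i : Fin n) :
    (companionMatrix n p ^ n) i 0 = -p.coeff i := by
  obtain ⟨m, rfl⟩ : ∃ m, n = m + 1 := Nat.exists_eq_succ_of_ne_zero (NeZero.ne n)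
  rw [pow_succ', Matrix.mul_apply, Finset.sum_eq_single (Fin.last m)]
  · rw [companionMatrix_pow_apply_zero p (Nat.lt_succ_self m), if_pos (Fin.val_last m), mul_one]
    simp [companionMatrix]
  · intro j _ hj
    rw [companionMatrix_pow_apply_zero p (Nat.lt_succ_self m),
      if_neg (fun h : (j : ℕ) = m => hj (Fin.ext h)), mul_zero]
  · simp

theorem aeval_companionMatrix_apply_zero [NeZero n] (p : R[X]) {q : R[X]}
    (hq : q.natDegree < n) (i : Fin n) :
    aeval (companionMatrix n p) q i 0 = q.coeff i := by
  rw [aeval_eq_sum_range' hq, Matrix.sum_apply, Finset.sum_eq_single (i : ℕ)]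
  · rw [Matrix.smul_apply, companionMatrix_pow_apply_zero p i.isLt, if_pos rfl, smul_eq_mul,
      mul_one]
  · intro k hk hki
    rw [Matrix.smul_apply, companionMatrix_pow_apply_zero p (Finset.mem_range.mp hk),
      if_neg (Ne.symm hki), smul_zero]
  · simp

theorem aeval_companionMatrix_self_apply_zero [NeZero n] {p : R[X]} (hp : p.IsMonicOfDegree n)
    (i : Fin n) : aeval (companionMatrix n p) p i 0 = 0 := by
  obtain ⟨q, rfl, hq⟩ := hp.exists_natDegree_lt (NeZero.ne n)
  rw [map_add, map_pow, aeval_X, Matrix.add_apply, companionMatrix_pow_self_apply_zero,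
    aeval_companionMatrix_apply_zero _ hq, coeff_add, coeff_X_pow, if_neg i.isLt.ne, zero_add,
    neg_add_cancel]

theorem charpoly_companionMatrix {p : R[X]} (hp : p.IsMonicOfDegree n) :
    (companionMatrix n p).charpoly = p := by
  rcases subsingleton_or_nontrivial R with _ | _
  · exact Subsingleton.elim _ _
  rcases Nat.eq_zero_or_pos n with rfl | hn
  · rw [isMonicOfDegree_zero_iff.mp hp, Matrix.charpoly_isEmpty]
  have : NeZero n := NeZero.of_pos hn
  have hq : (companionMatrix n p).charpoly.IsMonicOfDegree n :=
    ⟨by rw [Matrix.charpoly_natDegree_eq_dim, Fintype.card_fin], Matrix.charpoly_monic _⟩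
  have hlt := hq.natDegree_sub_lt hn.ne' hp
  -- the first column of `(charpoly - p)(C_p)` is both its coefficient vector and zero
  rw [← sub_eq_zero]
  ext k
  rw [coeff_zero]
  rcases lt_or_ge k n with hk | hk
  · have := aeval_companionMatrix_apply_zero p hlt ⟨k, hk⟩
    rwa [map_sub, Matrix.sub_apply, Matrix.aeval_self_charpoly,
      aeval_companionMatrix_self_apply_zero hp, Matrix.zero_apply, sub_zero, eq_comm] at this
  · exact coeff_eq_zero_of_natDegree_lt (hlt.trans_le hk)

theorem companionMatrix_map {S : Type*} [CommRing S] (φ : R →+* S) (p : R[X]) :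
    (companionMatrix n p).map φ = companionMatrix n (p.map φ) := by
  ext i j
  simp [companionMatrix, apply_ite φ]

end

theorem modByMonic_map_mem_lifts_of_companionMatrix {R S : Type*} [CommRing R] [CommRing S]
    [Nontrivial S] {n : ℕ} [NeZero n] {φ : R →+* S} {p : R[X]} (hp : p.IsMonicOfDegree n)
    {f : S[X]} (hf : ∀ i : Fin n, aeval ((companionMatrix n p).map φ) f i 0 ∈ φ.range) :
    f %ₘ p.map φ ∈ lifts φ := by
  have hpφ := hp.map φ
  have hne : p.map φ ≠ 1 := fun h =>
    NeZero.ne n (by rw [← hpφ.natDegree_eq, h, natDegree_one])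
  have hr : (f %ₘ p.map φ).natDegree < n :=
    hpφ.natDegree_eq ▸ natDegree_modByMonic_lt f hpφ.monic hne
  rw [lifts_iff_coeff_lifts]
  intro k
  rcases lt_or_ge k n with hk | hk
  · have := hf ⟨k, hk⟩
    rwa [Matrix.aeval_eq_aeval_mod_charpoly, Matrix.charpoly_map, charpoly_companionMatrix hp,
      companionMatrix_map, aeval_companionMatrix_apply_zero _ hr] at this
  · rw [coeff_eq_zero_of_natDegree_lt (hr.trans_le hk)]
    exact ⟨0, map_zero φ⟩

theorem stmt_7_general (D : Type*) [CommRing D] (K : Type*) [Field K]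
    [Algebra D K] (n : ℕ) (S : Set (Polynomial D))
    (hS : ∀ p ∈ S, p.Monic ∧ p.natDegree = n) :
    {f : Polynomial K | ∀ M : Matrix (Fin n) (Fin n) D, M.charpoly ∈ S → ∀ i j : Fin n,
        (Polynomial.aeval (M.map (algebraMap D K)) f) i j ∈ (algebraMap D K).range} =
      {f : Polynomial K | ∀ p ∈ S, ∀ i j : Fin n,
        (Polynomial.aeval ((companionMatrix n p).map (algebraMap D K)) f) i j
          ∈ (algebraMap D K).range} := by
  have hdeg (p : D[X]) (hp : p ∈ S) : p.IsMonicOfDegree n := ⟨(hS p hp).2, (hS p hp).1⟩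
  ext f
  refine ⟨fun hf p hp => hf _ ((charpoly_companionMatrix (hdeg p hp)).symm ▸ hp),
    fun hf M hM i j => ?_⟩
  have : NeZero n := NeZero.of_pos i.pos
  obtain ⟨r, hr⟩ := (mem_lifts _).mp
    (modByMonic_map_mem_lifts_of_companionMatrix (hdeg _ hM) fun k => hf _ hM k 0)
  rw [Matrix.aeval_eq_aeval_mod_charpoly, Matrix.charpoly_map, ← hr, Matrix.aeval_map_map]
  exact ⟨aeval M r i j, rfl⟩

/-- Let `D` be an integral domain with quotient field `K` and let `S` be a
set of monic polynomials of degree `n` in `D[X]`.  Then `Int(M_n^S(D)) = Int(C_n^S(D))`: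
a polynomial `f ∈ K[X]` satisfies `f(M) ∈ M_n(D)` for every matrix `M ∈ M_n(D)` with
characteristic polynomial in `S` if and only if `f(C_p) ∈ M_n(D)` for every `p ∈ S`,
where `C_p` is the companion matrix of `p` (values are computed in `M_n(K)`). -/
theorem stmt_7 (D : Type*) [CommRing D] [IsDomain D] (K : Type*) [Field K]
    [Algebra D K] [IsFractionRing D K] (n : ℕ) (S : Set (Polynomial D))
    (hS : ∀ p ∈ S, p.Monic ∧ p.natDegree = n) :
    {f : Polynomial K | ∀ M : Matrix (Fin n) (Fin n) D, M.charpoly ∈ S → ∀ i j : Fin n,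
        (Polynomial.aeval (M.map (algebraMap D K)) f) i j ∈ (algebraMap D K).range} =
      {f : Polynomial K | ∀ p ∈ S, ∀ i j : Fin n,
        (Polynomial.aeval ((companionMatrix n p).map (algebraMap D K)) f) i j
          ∈ (algebraMap D K).range} :=
  stmt_7_general D K n S hS
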